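/- Let M ≥ 1, 1 ≤ R ≤ M, σ_e² > 0, σ_ε² > 0, λ_1 ≥ … ≥ λ_R > 0 and ỹ ∈ ℝ^M, and suppose there exists an index j with λ_j = λ_R and ỹ_j ≠ 0. Then there exists exactly one ν in the interval (−λ_R²/(2σ_e²), M/2] such that g(ν) = 0. -/
import Mathlib


/-- The scalar dual function
`g(ν) = ∑_{j=1}^R ỹ_j² ν σ_e²/(λ_j² + 2νσ_e²) + (1/2) ∑_{m=R+1}^M ỹ_m²
        − (M/2)(∑_{j=1}^R σ_e² ỹ_j² λ_j²/(λ_j² + 2νσ_e²)² + σ_ε²) + ν σ_ε²`. -/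
noncomputable def gFun (M R : ℕ) (hRM : R ≤ M) (se seps : ℝ)
    (lam : Fin R → ℝ) (y : Fin M → ℝ) (ν : ℝ) : ℝ :=
  (∑ j : Fin R, (y (Fin.castLE hRM j)) ^ 2 * ν * se / ((lam j) ^ 2 + 2 * ν * se))
    + (1/2) * (∑ m ∈ Finset.univ.filter (fun m : Fin M => R ≤ (m : ℕ)), (y m) ^ 2)
    - ((M : ℝ)/2) * ((∑ j : Fin R, se * (y (Fin.castLE hRM j)) ^ 2 * (lam j) ^ 2
        / ((lam j) ^ 2 + 2 * ν * se) ^ 2) + seps)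
    + ν * seps

set_option maxHeartbeats 1000000

/-- **(Proposition 2.)** If some index `j` attains the smallest singular value `λ_R`
with `ỹ_j ≠ 0`, then there exists exactly one `ν ∈ (−λ_R²/(2σ_e²), M/2]` with
`g(ν) = 0`. -/
theorem stmt_6 (M R : ℕ) (hM : 1 ≤ M) (hR : 1 ≤ R) (hRM : R ≤ M)
    (se seps : ℝ) (hse : 0 < se) (hseps : 0 < seps)
    (lam : Fin R → ℝ) (hlam : ∀ j, 0 < lam j)
    (hord : ∀ i j : Fin R, i ≤ j → lam j ≤ lam i)
    (y : Fin M → ℝ)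
    (hexists : ∃ j : Fin R, lam j = lam ⟨R - 1, by omega⟩ ∧ y (Fin.castLE hRM j) ≠ 0) :
    ∃! ν : ℝ, ν ∈ Set.Ioc (-(lam ⟨R - 1, by omega⟩) ^ 2 / (2 * se)) ((M : ℝ)/2) ∧
      gFun M R hRM se seps lam y ν = 0 := by
  obtain ⟨j0, hj0l, hj0y⟩ := hexists
  set L : Fin R := ⟨R - 1, by omega⟩ with hL
  set a : ℝ := -(lam L) ^ 2 / (2 * se) with ha
  set g : ℝ → ℝ := gFun M R hRM se seps lam y with hg
  have hse2 : (0:ℝ) < 2 * se := by linarith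
  have hamul : a * (2 * se) = -(lam L) ^ 2 := div_mul_cancel₀ _ (ne_of_gt hse2)
  have hd : ∀ (j : Fin R) (ν : ℝ), a < ν → 0 < (lam j) ^ 2 + 2 * ν * se := by
    intro j ν hν
    have hjL : j ≤ L := by
      have := j.isLt
      simp only [hL, Fin.le_def]
      omega
    have h1 : (lam L) ^ 2 ≤ (lam j) ^ 2 :=
      pow_le_pow_left₀ (hlam L).le (hord j L hjL) 2
    have h2 : a * (2 * se) < ν * (2 * se) := mul_lt_mul_of_pos_right hν hse2
    nlinarith
  have ha0 : a < 0 := div_neg_of_neg_of_pos (by nlinarith [hlam L]) hse2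
  have hM1 : (1:ℝ) ≤ (M:ℝ) := by exact_mod_cast hM
  have haM : a < (M:ℝ)/2 := lt_of_lt_of_le ha0 (by linarith)
  -- strict monotonicity
  have hmono : ∀ ν1 ν2 : ℝ, a < ν1 → ν1 < ν2 → g ν1 < g ν2 := by
    intro ν1 ν2 h1 h2
    have h2' : a < ν2 := h1.trans h2
    have hs1 : ∀ j : Fin R,
        (y (Fin.castLE hRM j)) ^ 2 * ν1 * se / ((lam j) ^ 2 + 2 * ν1 * se)
        ≤ (y (Fin.castLE hRM j)) ^ 2 * ν2 * se / ((lam j) ^ 2 + 2 * ν2 * se) := by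
      intro j
      rw [div_le_div_iff₀ (hd j ν1 h1) (hd j ν2 h2')]
      have hkey : 0 ≤ (y (Fin.castLE hRM j)) ^ 2 * se * ((ν2 - ν1) * (lam j) ^ 2) :=
        mul_nonneg (mul_nonneg (sq_nonneg _) hse.le)
          (mul_nonneg (by linarith) (sq_nonneg _))
      nlinarith [hkey]
    have hs2 : ∀ j : Fin R,
        se * (y (Fin.castLE hRM j)) ^ 2 * (lam j) ^ 2 / ((lam j) ^ 2 + 2 * ν2 * se) ^ 2
        ≤ se * (y (Fin.castLE hRM j)) ^ 2 * (lam j) ^ 2 / ((lam j) ^ 2 + 2 * ν1 * se) ^ 2 := by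
      intro j
      apply div_le_div_of_nonneg_left _ (pow_pos (hd j ν1 h1) 2)
      · apply pow_le_pow_left₀ (hd j ν1 h1).le
        nlinarith
      · positivity
    have hS1 := Finset.sum_le_sum (fun j (_ : j ∈ Finset.univ) => hs1 j)
    have hS2 := Finset.sum_le_sum (fun j (_ : j ∈ Finset.univ) => hs2 j)
    have hM0 : (0:ℝ) ≤ (M:ℝ)/2 := by linarith
    have hS2' : ((M:ℝ)/2) * ∑ j : Fin R, se * (y (Fin.castLE hRM j)) ^ 2 * (lam j) ^ 2
          / ((lam j) ^ 2 + 2 * ν2 * se) ^ 2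
        ≤ ((M:ℝ)/2) * ∑ j : Fin R, se * (y (Fin.castLE hRM j)) ^ 2 * (lam j) ^ 2
          / ((lam j) ^ 2 + 2 * ν1 * se) ^ 2 := mul_le_mul_of_nonneg_left hS2 hM0
    have hlin : ν1 * seps < ν2 * seps := mul_lt_mul_of_pos_right h2 hseps
    have hdist1 : ((M:ℝ)/2) * ((∑ j : Fin R, se * (y (Fin.castLE hRM j)) ^ 2 * (lam j) ^ 2
          / ((lam j) ^ 2 + 2 * ν1 * se) ^ 2) + seps)
        = ((M:ℝ)/2) * (∑ j : Fin R, se * (y (Fin.castLE hRM j)) ^ 2 * (lam j) ^ 2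
          / ((lam j) ^ 2 + 2 * ν1 * se) ^ 2) + ((M:ℝ)/2) * seps := by ring
    have hdist2 : ((M:ℝ)/2) * ((∑ j : Fin R, se * (y (Fin.castLE hRM j)) ^ 2 * (lam j) ^ 2
          / ((lam j) ^ 2 + 2 * ν2 * se) ^ 2) + seps)
        = ((M:ℝ)/2) * (∑ j : Fin R, se * (y (Fin.castLE hRM j)) ^ 2 * (lam j) ^ 2
          / ((lam j) ^ 2 + 2 * ν2 * se) ^ 2) + ((M:ℝ)/2) * seps := by ring
    simp only [hg, gFun]
    linarith
  -- continuity
  have hcont : ContinuousOn g (Set.Ioi a) := by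
    simp only [hg, gFun]
    apply ContinuousOn.add
    apply ContinuousOn.sub
    apply ContinuousOn.add
    · exact continuousOn_finset_sum _ fun j _ =>
        ContinuousOn.div (by fun_prop) (by fun_prop) (fun x hx => (hd j x hx).ne')
    · exact continuousOn_const
    · apply ContinuousOn.mul continuousOn_const
      apply ContinuousOn.add _ continuousOn_const
      exact continuousOn_finset_sum _ fun j _ =>
        ContinuousOn.div (by fun_prop) (by fun_prop)
          (fun x hx => (pow_pos (hd j x hx) 2).ne')
    · fun_prop
  -- g(M/2) ≥ 0
  have hgM : 0 ≤ g ((M:ℝ)/2) := by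
    simp only [hg, gFun]
    have hterm : ∀ j : Fin R,
        ((M:ℝ)/2) * (se * (y (Fin.castLE hRM j)) ^ 2 * (lam j) ^ 2
          / ((lam j) ^ 2 + 2 * ((M:ℝ)/2) * se) ^ 2)
        ≤ (y (Fin.castLE hRM j)) ^ 2 * ((M:ℝ)/2) * se
          / ((lam j) ^ 2 + 2 * ((M:ℝ)/2) * se) := by
      intro j
      have hdj : 0 < (lam j) ^ 2 + 2 * ((M:ℝ)/2) * se := hd j _ haM
      rw [mul_div_assoc', div_le_div_iff₀ (pow_pos hdj 2) hdj]
      nlinarith [mul_nonneg (mul_nonneg (mul_nonneg (mul_nonneg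
          (by linarith : (0:ℝ) ≤ (M:ℝ)/2) hse.le) (sq_nonneg (y (Fin.castLE hRM j))))
          (by positivity : (0:ℝ) ≤ (M:ℝ) * se)) hdj.le]
    have hSle : ((M:ℝ)/2) * ∑ j : Fin R, se * (y (Fin.castLE hRM j)) ^ 2 * (lam j) ^ 2
          / ((lam j) ^ 2 + 2 * ((M:ℝ)/2) * se) ^ 2
        ≤ ∑ j : Fin R, (y (Fin.castLE hRM j)) ^ 2 * ((M:ℝ)/2) * se
          / ((lam j) ^ 2 + 2 * ((M:ℝ)/2) * se) := by
      rw [Finset.mul_sum]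
      exact Finset.sum_le_sum fun j _ => hterm j
    have hT : 0 ≤ ∑ m ∈ Finset.univ.filter (fun m : Fin M => R ≤ (m : ℕ)), (y m) ^ 2 :=
      Finset.sum_nonneg fun m _ => sq_nonneg _
    have hdist : ((M:ℝ)/2) * ((∑ j : Fin R, se * (y (Fin.castLE hRM j)) ^ 2 * (lam j) ^ 2
          / ((lam j) ^ 2 + 2 * ((M:ℝ)/2) * se) ^ 2) + seps)
        = ((M:ℝ)/2) * (∑ j : Fin R, se * (y (Fin.castLE hRM j)) ^ 2 * (lam j) ^ 2
          / ((lam j) ^ 2 + 2 * ((M:ℝ)/2) * se) ^ 2) + ((M:ℝ)/2) * seps := by ring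
    linarith
  -- the blow-up term
  have hy2 : 0 < (y (Fin.castLE hRM j0)) ^ 2 :=
    (sq_nonneg _).lt_of_ne (Ne.symm (pow_ne_zero 2 hj0y))
  set c : ℝ := ((M:ℝ)/2) * (se * (y (Fin.castLE hRM j0)) ^ 2 * (lam j0) ^ 2) with hc
  have hcpos : 0 < c :=
    mul_pos (by linarith) (mul_pos (mul_pos hse hy2) (pow_pos (hlam j0) 2))
  have hd0zero : (lam j0) ^ 2 + 2 * a * se = 0 := by
    rw [hj0l]; linear_combination hamul
  have hd0t : Filter.Tendsto (fun ν : ℝ => ((lam j0) ^ 2 + 2 * ν * se) ^ 2)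
      (nhdsWithin a (Set.Ioi a)) (nhdsWithin 0 (Set.Ioi 0)) := by
    apply tendsto_nhdsWithin_of_tendsto_nhds_of_eventually_within
    · have hct : Continuous fun ν : ℝ => ((lam j0) ^ 2 + 2 * ν * se) ^ 2 := by fun_prop
      have := (hct.tendsto a).mono_left (nhdsWithin_le_nhds (s := Set.Ioi a))
      simpa [hd0zero] using this
    · filter_upwards [self_mem_nhdsWithin] with ν hν
      exact pow_pos (hd j0 ν hν) 2
  have hinv : Filter.Tendsto (fun ν : ℝ => c / ((lam j0) ^ 2 + 2 * ν * se) ^ 2)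
      (nhdsWithin a (Set.Ioi a)) Filter.atTop := by
    have h1 := tendsto_inv_nhdsGT_zero.comp hd0t
    have h2 := Filter.Tendsto.const_mul_atTop hcpos h1
    simpa [div_eq_mul_inv, Function.comp] using h2
  set T : ℝ := ∑ m ∈ Finset.univ.filter (fun m : Fin M => R ≤ (m : ℕ)), (y m) ^ 2 with hT
  set F : ℝ → ℝ := fun ν => ((1/2) * T - ((M:ℝ)/2) * seps + ν * seps)
      + (-(c / ((lam j0) ^ 2 + 2 * ν * se) ^ 2)) with hF
  have hFt : Filter.Tendsto F (nhdsWithin a (Set.Ioi a)) Filter.atBot := by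
    have h1 : Filter.Tendsto (fun ν : ℝ => (1/2) * T - ((M:ℝ)/2) * seps + ν * seps)
        (nhdsWithin a (Set.Ioi a)) (nhds ((1/2) * T - ((M:ℝ)/2) * seps + a * seps)) := by
      apply Filter.Tendsto.mono_left _ nhdsWithin_le_nhds
      exact (by fun_prop : Continuous fun ν : ℝ => (1/2) * T - ((M:ℝ)/2) * seps + ν * seps).tendsto a
    exact h1.add_atBot (Filter.tendsto_neg_atTop_atBot.comp hinv)
  have hgleF : ∀ᶠ ν in nhdsWithin a (Set.Ioi a), g ν ≤ F ν := by
    filter_upwards [Ioo_mem_nhdsGT_of_mem ⟨le_refl a, ha0⟩] with ν hν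
    have hνa : a < ν := hν.1
    have hν0 : ν < 0 := hν.2
    have hS1 : (∑ j : Fin R, (y (Fin.castLE hRM j)) ^ 2 * ν * se
        / ((lam j) ^ 2 + 2 * ν * se)) ≤ 0 := by
      apply Finset.sum_nonpos
      intro j _
      apply div_nonpos_of_nonpos_of_nonneg _ (hd j ν hνa).le
      nlinarith [mul_nonneg (mul_nonneg (sq_nonneg (y (Fin.castLE hRM j))) hse.le)
        (neg_nonneg.mpr hν0.le)]
    have hS2 : se * (y (Fin.castLE hRM j0)) ^ 2 * (lam j0) ^ 2
          / ((lam j0) ^ 2 + 2 * ν * se) ^ 2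
        ≤ ∑ j : Fin R, se * (y (Fin.castLE hRM j)) ^ 2 * (lam j) ^ 2
          / ((lam j) ^ 2 + 2 * ν * se) ^ 2 := by
      apply Finset.single_le_sum (f := fun j : Fin R => se * (y (Fin.castLE hRM j)) ^ 2
        * (lam j) ^ 2 / ((lam j) ^ 2 + 2 * ν * se) ^ 2) _ (Finset.mem_univ j0)
      intro j _
      positivity
    have hS2' : ((M:ℝ)/2) * (se * (y (Fin.castLE hRM j0)) ^ 2 * (lam j0) ^ 2
          / ((lam j0) ^ 2 + 2 * ν * se) ^ 2)
        ≤ ((M:ℝ)/2) * ∑ j : Fin R, se * (y (Fin.castLE hRM j)) ^ 2 * (lam j) ^ 2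
          / ((lam j) ^ 2 + 2 * ν * se) ^ 2 := mul_le_mul_of_nonneg_left hS2 (by linarith)
    have hceq : c / ((lam j0) ^ 2 + 2 * ν * se) ^ 2
        = ((M:ℝ)/2) * (se * (y (Fin.castLE hRM j0)) ^ 2 * (lam j0) ^ 2
          / ((lam j0) ^ 2 + 2 * ν * se) ^ 2) := by
      rw [hc]; ring
    have hdist : ((M:ℝ)/2) * ((∑ j : Fin R, se * (y (Fin.castLE hRM j)) ^ 2 * (lam j) ^ 2
          / ((lam j) ^ 2 + 2 * ν * se) ^ 2) + seps)
        = ((M:ℝ)/2) * (∑ j : Fin R, se * (y (Fin.castLE hRM j)) ^ 2 * (lam j) ^ 2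
          / ((lam j) ^ 2 + 2 * ν * se) ^ 2) + ((M:ℝ)/2) * seps := by ring
    simp only [hg, gFun, hF, ← hT]
    linarith
  have hbot : Filter.Tendsto g (nhdsWithin a (Set.Ioi a)) Filter.atBot :=
    Filter.tendsto_atBot_mono' _ hgleF hFt
  have hev : ∀ᶠ ν in nhdsWithin a (Set.Ioi a), g ν < 0 :=
    hbot.eventually (Filter.eventually_lt_atBot 0)
  have hmemIoo : Set.Ioo a ((M:ℝ)/2) ∈ nhdsWithin a (Set.Ioi a) :=
    Ioo_mem_nhdsGT_of_mem ⟨le_refl a, haM⟩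
  obtain ⟨ν0, hν0g, hν0mem⟩ :=
    (hev.and (Filter.eventually_of_mem hmemIoo (fun x hx => hx))).exists
  -- IVT
  have hIcc : Set.Icc ν0 ((M:ℝ)/2) ⊆ Set.Ioi a := fun x hx => lt_of_lt_of_le hν0mem.1 hx.1
  obtain ⟨ν, hνmem, hνzero⟩ :=
    intermediate_value_Icc hν0mem.2.le (hcont.mono hIcc) ⟨hν0g.le, hgM⟩
  refine ⟨ν, ⟨⟨lt_of_lt_of_le hν0mem.1 hνmem.1, hνmem.2⟩, hνzero⟩, ?_⟩
  rintro x ⟨⟨hx1, hx2⟩, hxz⟩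
  by_contra hne
  have hνa : a < ν := lt_of_lt_of_le hν0mem.1 hνmem.1
  rcases lt_or_gt_of_ne hne with h | h
  · have := hmono x ν hx1 h
    rw [hxz, hνzero] at this
    exact lt_irrefl 0 this
  · have := hmono ν x hνa h
    rw [hxz, hνzero] at this
    exact lt_irrefl 0 this
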